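/- Fix a ∈ (0,1] and a sequence α_1, α_2, ... with α_n ∈ [a,1] for all n. Let the nested designs X_n be generated by the relaxed greedy-packing algorithm: x_1 ∈ X is arbitrary and for each n ≥ 1, x_{n+1} is any point of X with min_{x_i∈X_n} ‖x_{n+1} − x_i‖ ≥ α_n·CR(X_n). Then for all n ≥ 2, SR(X_n) ≥ (a/2)·CR(X_{n-1}). -/

import Mathlib

open Metric Set MeasureTheory

/-- Distance from a point `x` to the nearest point of the design `D`. -/
noncomputable def minDist {E : Type*} [NormedAddCommGroup E] (D : Finset E) (x : E) : ℝ :=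
  sInf ((fun p => dist x p) '' (D : Set E))

/-- Fill distance (covering radius) of the design `D` for the set `A`:
`CR_A(D) = sup_{x ∈ A} min_{p ∈ D} ‖x - p‖`. -/
noncomputable def fillDist {E : Type*} [NormedAddCommGroup E] (A : Set E) (D : Finset E) : ℝ :=
  sSup ((fun x => minDist D x) '' A)

/-- Separation radius of the design `D`:
`SR(D) = (1/2) min_{p ≠ q ∈ D} ‖p - q‖`. -/
noncomputable def sepRad {E : Type*} [NormedAddCommGroup E] (D : Finset E) : ℝ :=
  (1 / 2) * sInf ((fun p : E × E => dist p.1 p.2) '' {p | p.1 ∈ D ∧ p.2 ∈ D ∧ p.1 ≠ p.2})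

/-- Mesh-ratio of the design `D` for the set `A`: `MR(D) = CR_A(D) / SR(D)`. -/
noncomputable def meshRatio {E : Type*} [NormedAddCommGroup E] (A : Set E) (D : Finset E) : ℝ :=
  fillDist A D / sepRad D

/-- The nested design consisting of the first `n` points of the sequence `x`. -/
noncomputable def design {E : Type*} (x : ℕ → E) (n : ℕ) : Finset E :=
  letI := Classical.decEq E
  (Finset.range n).image x

/-! Every new point of a relaxed greedy packing lies at distance at least `a` times the current
fill distance from all earlier points, and fill distances only shrink as the design grows. Hence
any two of the first `n` points are at distance at least `a · CR(X_{n-1})`. The sequence is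
indexed from `0`, so `x k` is the paper's `x_{k+1}` and `design x k` is `X_k`. -/

section Design

variable {E : Type*}

lemma mem_design_iff {x : ℕ → E} {n : ℕ} {p : E} : p ∈ design x n ↔ ∃ i < n, x i = p := by
  simp [design]

lemma mem_design {x : ℕ → E} {i n : ℕ} (hi : i < n) : x i ∈ design x n :=
  mem_design_iff.2 ⟨i, hi, rfl⟩

lemma design_mono (x : ℕ → E) {m n : ℕ} (h : m ≤ n) : design x m ⊆ design x n := fun _ hp =>
  let ⟨i, hi, hip⟩ := mem_design_iff.1 hp
  mem_design_iff.2 ⟨i, hi.trans_le h, hip⟩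

end Design

section Packing

variable {E : Type*} [NormedAddCommGroup E]

lemma minDist_nonneg (D : Finset E) (y : E) : 0 ≤ minDist D y :=
  Real.sInf_nonneg <| by rintro _ ⟨q, -, rfl⟩; exact dist_nonneg

lemma minDist_le_dist {D : Finset E} {p : E} (hp : p ∈ D) (y : E) :
    minDist D y ≤ dist y p :=
  csInf_le ⟨0, by rintro _ ⟨q, -, rfl⟩; exact dist_nonneg⟩ ⟨p, hp, rfl⟩

lemma minDist_anti {D D' : Finset E} (h : D ⊆ D') (hD : D.Nonempty) (y : E) :
    minDist D' y ≤ minDist D y :=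
  csInf_le_csInf ⟨0, by rintro _ ⟨q, -, rfl⟩; exact dist_nonneg⟩
    ((Finset.coe_nonempty.2 hD).image _) (Set.image_mono (Finset.coe_subset.2 h))

lemma fillDist_nonneg (S : Set E) (D : Finset E) : 0 ≤ fillDist S D :=
  Real.sSup_nonneg <| by rintro _ ⟨y, -, rfl⟩; exact minDist_nonneg D y

lemma bddAbove_minDist_image {S : Set E} (hS : Bornology.IsBounded S) {D : Finset E}
    (hD : D.Nonempty) : BddAbove ((minDist D ·) '' S) := by
  obtain ⟨p, hp⟩ := hD
  obtain ⟨R, hR⟩ := hS.subset_closedBall p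
  refine ⟨R, ?_⟩
  rintro _ ⟨y, hy, rfl⟩
  exact (minDist_le_dist hp y).trans (mem_closedBall.1 (hR hy))

lemma fillDist_anti {S : Set E} (hS : Bornology.IsBounded S) {D D' : Finset E} (h : D ⊆ D')
    (hD : D.Nonempty) : fillDist S D' ≤ fillDist S D := by
  refine Real.sSup_le ?_ (fillDist_nonneg S D)
  rintro _ ⟨y, hy, rfl⟩
  exact (minDist_anti h hD y).trans (le_csSup (bddAbove_minDist_image hS hD) ⟨y, hy, rfl⟩)

lemma half_le_sepRad {D : Finset E} {c : ℝ} {p₀ q₀ : E} (hp₀ : p₀ ∈ D) (hq₀ : q₀ ∈ D)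
    (hpq₀ : p₀ ≠ q₀) (h : ∀ p ∈ D, ∀ q ∈ D, p ≠ q → c ≤ dist p q) : c / 2 ≤ sepRad D := by
  have hc : c ≤ sInf ((fun p : E × E => dist p.1 p.2) '' {p | p.1 ∈ D ∧ p.2 ∈ D ∧ p.1 ≠ p.2}) :=
    le_csInf ⟨_, (p₀, q₀), ⟨hp₀, hq₀, hpq₀⟩, rfl⟩ <| by
      rintro _ ⟨⟨p, q⟩, ⟨hp, hq, hpq⟩, rfl⟩
      exact h p hp q hq hpq
  rw [sepRad]
  linarith

lemma half_le_sepRad_design {x : ℕ → E} {n : ℕ} {c : ℝ} (hn : 2 ≤ n) (hx01 : x 0 ≠ x 1)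
    (h : ∀ i j, i < j → j < n → c ≤ dist (x j) (x i)) : c / 2 ≤ sepRad (design x n) := by
  refine half_le_sepRad (mem_design (by omega)) (mem_design (by omega)) hx01 ?_
  intro p hp q hq hpq
  obtain ⟨i, hi, rfl⟩ := mem_design_iff.1 hp
  obtain ⟨j, hj, rfl⟩ := mem_design_iff.1 hq
  rcases lt_or_gt_of_ne (ne_of_apply_ne x hpq) with hij | hji
  · exact dist_comm (x i) (x j) ▸ h i j hij hj
  · exact h j i hji hi

lemma mul_fillDist_le_dist_of_relaxedGreedy {S : Set E} (hS : Bornology.IsBounded S)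
    {x : ℕ → E} {a : ℝ} {α : ℕ → ℝ} (ha : 0 ≤ a) (haα : ∀ k, a ≤ α k)
    (hrelax : ∀ k, 1 ≤ k → α k * fillDist S (design x k) ≤ minDist (design x k) (x k))
    {i j m : ℕ} (hij : i < j) (hjm : j ≤ m) :
    a * fillDist S (design x m) ≤ dist (x j) (x i) :=
  calc a * fillDist S (design x m)
      ≤ α j * fillDist S (design x j) :=
        mul_le_mul (haα j) (fillDist_anti hS (design_mono x hjm) ⟨x 0, mem_design (by omega)⟩)
          (fillDist_nonneg S _) (ha.trans (haα j))
    _ ≤ minDist (design x j) (x j) := hrelax j (by omega)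
    _ ≤ dist (x j) (x i) := minDist_le_dist (mem_design hij) (x j)

end Packing

theorem statement11_general
    {E : Type*} [NormedAddCommGroup E]
    (S : Set E) (hS : IsCompact S)
    (a : ℝ) (ha : a ∈ Set.Ioc (0 : ℝ) 1) (α : ℕ → ℝ) (hα : ∀ k, α k ∈ Set.Icc a 1)
    (x : ℕ → E) (hinj : Function.Injective x)
    (hrelax : ∀ k : ℕ, 1 ≤ k →
      x k ∈ S ∧ α k * fillDist S (design x k) ≤ minDist (design x k) (x k))
    (n : ℕ) (hn : 2 ≤ n) :
    (a / 2) * fillDist S (design x (n - 1)) ≤ sepRad (design x n) := by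
  have hsep : ∀ i j, i < j → j < n → a * fillDist S (design x (n - 1)) ≤ dist (x j) (x i) :=
    fun i j hij hjn => mul_fillDist_le_dist_of_relaxedGreedy hS.isBounded ha.1.le
      (fun k => (hα k).1) (fun k hk => (hrelax k hk).2) hij (by omega)
  rw [div_mul_eq_mul_div]
  exact half_le_sepRad_design hn (hinj.ne zero_ne_one) hsep

/-- Fix `a ∈ (0,1]` and `αₖ ∈ [a,1]`. If the nested designs `Xₙ` are
generated by the relaxed greedy-packing algorithm (the `(k+1)`-th point `x k` lies in `S` and
satisfies `min_{x_i ∈ X_k} ‖x_{k+1} − x_i‖ ≥ αₖ·CR(X_k)`), then for all `n ≥ 2`,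
`SR(Xₙ) ≥ (a/2)·CR(X_{n−1})`. -/
theorem statement11 {d : ℕ} (hd : 1 ≤ d)
    {E : Type*} [NormedAddCommGroup E] [NormedSpace ℝ E] [FiniteDimensional ℝ E]
    (hdim : Module.finrank ℝ E = d)
    (S : Set E) (hS : IsCompact S)
    (a : ℝ) (ha : a ∈ Set.Ioc (0 : ℝ) 1) (α : ℕ → ℝ) (hα : ∀ k, α k ∈ Set.Icc a 1)
    (x : ℕ → E) (hinj : Function.Injective x) (hx0 : x 0 ∈ S)
    (hrelax : ∀ k : ℕ, 1 ≤ k →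
      x k ∈ S ∧ α k * fillDist S (design x k) ≤ minDist (design x k) (x k))
    (n : ℕ) (hn : 2 ≤ n) :
    (a / 2) * fillDist S (design x (n - 1)) ≤ sepRad (design x n) :=
  statement11_general S hS a ha α hα x hinj hrelax n hn
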